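/- The pre-kernel κ(z,w) := √π e^{z²+w²} erf(z−w), defined for all complex z, w, satisfies, for k-point functions of the form R_k(z₁,…,z_k) = ∏_j(z̄_j − z_j) Pf[K(z_j,z_l)], translation invariance R_k(z₁+t,…,z_k+t) = R_k(z₁,…,z_k) for all real t, where K(z,w) = e^{−|z|²−|w|²} [[κ(z,w), κ(z,w̄)],[κ(z̄,w), κ(z̄,w̄)]]. -/

import Mathlib

open scoped BigOperators

/-- The error function extended to complex arguments,
`erf(z) = (2/√π) ∫₀^z e^{-t²} dt` along the segment from `0` to `z`. -/
noncomputable def cerf (z : ℂ) : ℂ :=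
  (2 / (Real.sqrt Real.pi : ℂ)) * ∫ t in (0:ℝ)..1, z * Complex.exp (-((t : ℂ) * z) ^ 2)

/-- The bulk pre-kernel `κ(z,w) = √π e^{z²+w²} erf(z-w)`. -/
noncomputable def kappaBulk (z w : ℂ) : ℂ :=
  (Real.sqrt Real.pi : ℂ) * Complex.exp (z ^ 2 + w ^ 2) * cerf (z - w)

/-- The Pfaffian of a `2k × 2k` matrix:
`Pf(A) = (1/(2^k k!)) Σ_σ sgn(σ) ∏_{i<k} A(σ(2i), σ(2i+1))`. -/
noncomputable def pfaffian {k : ℕ} (A : Matrix (Fin (2 * k)) (Fin (2 * k)) ℂ) : ℂ :=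
  (1 / ((2 : ℂ) ^ k * (Nat.factorial k : ℂ))) *
    ∑ σ : Equiv.Perm (Fin (2 * k)), ((Equiv.Perm.sign σ : ℤ) : ℂ) *
      ∏ i : Fin k,
        A (σ ⟨2 * (i : ℕ), by have := i.isLt; omega⟩)
          (σ ⟨2 * (i : ℕ) + 1, by have := i.isLt; omega⟩)

/-- For `i : Fin (2k)`, the argument `z_{i/2}` (for even `i`) or `conj z_{i/2}` (for odd `i`)
entering the `2×2`-block matrix kernel. -/
noncomputable def pick {k : ℕ} (z : Fin k → ℂ) (i : Fin (2 * k)) : ℂ :=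
  if (i : ℕ) % 2 = 0 then z ⟨(i : ℕ) / 2, by have := i.isLt; omega⟩
  else (starRingEnd ℂ) (z ⟨(i : ℕ) / 2, by have := i.isLt; omega⟩)

/-- The `2k × 2k` matrix `[K(z_j, z_l)]` built out of the `2×2` blocks
`K(z,w) = e^{-|z|²-|w|²} [[κ(z,w), κ(z,w̄)],[κ(z̄,w), κ(z̄,w̄)]]`. -/
noncomputable def kernelMatrix {k : ℕ} (z : Fin k → ℂ) :
    Matrix (Fin (2 * k)) (Fin (2 * k)) ℂ :=
  Matrix.of fun i j =>
    Complex.exp (-(‖z ⟨(i : ℕ) / 2, by have := i.isLt; omega⟩‖ : ℂ) ^ 2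
        - (‖z ⟨(j : ℕ) / 2, by have := j.isLt; omega⟩‖ : ℂ) ^ 2) *
      kappaBulk (pick z i) (pick z j)

/-- The `k`-point correlation function
`R_k(z₁,…,z_k) = ∏_j (z̄_j - z_j) Pf[K(z_j, z_l)]`. -/
noncomputable def Rk {k : ℕ} (z : Fin k → ℂ) : ℂ :=
  (∏ j : Fin k, ((starRingEnd ℂ) (z j) - z j)) * pfaffian (kernelMatrix z)


section Aux

lemma prod_range_pair (g : ℕ → ℂ) (k : ℕ) :
    ∏ i ∈ Finset.range k, (g (2*i) * g (2*i+1)) = ∏ m ∈ Finset.range (2*k), g m := by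
  induction k with
  | zero => simp
  | succ n ih =>
    rw [Finset.prod_range_succ, ih, show 2*(n+1) = 2*n+1+1 by ring,
      Finset.prod_range_succ, Finset.prod_range_succ, mul_assoc]

lemma prod_fin_pair {k : ℕ} (f : Fin (2*k) → ℂ) :
    ∏ i : Fin k, (f ⟨2*(i:ℕ), by have := i.isLt; omega⟩ *
        f ⟨2*(i:ℕ)+1, by have := i.isLt; omega⟩) = ∏ m : Fin (2*k), f m := by
  set g : ℕ → ℂ := fun n => if h : n < 2*k then f ⟨n, h⟩ else 1 with hg
  have h1 : ∏ i : Fin k, (f ⟨2*(i:ℕ), by have := i.isLt; omega⟩ *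
      f ⟨2*(i:ℕ)+1, by have := i.isLt; omega⟩)
      = ∏ i ∈ Finset.range k, (g (2*i) * g (2*i+1)) := by
    rw [← Fin.prod_univ_eq_prod_range]
    refine Finset.prod_congr rfl fun i _ => ?_
    have h2 : 2*(i:ℕ) < 2*k := by have := i.isLt; omega
    have h3 : 2*(i:ℕ)+1 < 2*k := by have := i.isLt; omega
    simp [hg, h2, h3]
  have h2 : ∏ m : Fin (2*k), f m = ∏ m ∈ Finset.range (2*k), g m := by
    rw [← Fin.prod_univ_eq_prod_range]
    refine Finset.prod_congr rfl fun m _ => ?_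
    simp [hg, m.isLt]
  rw [h1, h2, prod_range_pair]

end Aux

section Main
variable {k : ℕ}

/-- The multiplicative factor picked up by row/column `i` under translation by `t`. -/
noncomputable def cfac (z : Fin k → ℂ) (t : ℝ) (i : Fin (2*k)) : ℂ :=
  Complex.exp ((t : ℂ) * (pick z i - (starRingEnd ℂ) (pick z i)))

lemma pick_shift (z : Fin k → ℂ) (t : ℝ) (i : Fin (2*k)) :
    pick (fun j => z j + (t : ℂ)) i = pick z i + (t : ℂ) := by
  unfold pick
  split <;> simp [map_add, Complex.conj_ofReal]

lemma pick_add_conj (z : Fin k → ℂ) (i : Fin (2*k)) :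
    pick z i + (starRingEnd ℂ) (pick z i)
      = z ⟨(i : ℕ) / 2, by have := i.isLt; omega⟩
        + (starRingEnd ℂ) (z ⟨(i : ℕ) / 2, by have := i.isLt; omega⟩) := by
  unfold pick
  split
  · rfl
  · rw [Complex.conj_conj]; ring

lemma abs_sq_eq (w : ℂ) : ((‖w‖ : ℂ)) ^ 2 = w * (starRingEnd ℂ) w := by
  rw [← Complex.ofReal_pow, Complex.sq_norm, Complex.mul_conj]

lemma entry_shift (z : Fin k → ℂ) (t : ℝ) (i j : Fin (2*k)) :
    kernelMatrix (fun m => z m + (t : ℂ)) i j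
      = cfac z t i * cfac z t j * kernelMatrix z i j := by
  have key : ∀ a b c : ℂ, Complex.exp a * ((Real.sqrt Real.pi : ℂ) * Complex.exp b * c)
      = Complex.exp (a + b) * ((Real.sqrt Real.pi : ℂ) * c) := fun a b c => by
    rw [Complex.exp_add]; ring
  have key2 : ∀ u v w x : ℂ, Complex.exp u * Complex.exp v * (Complex.exp w * x)
      = Complex.exp (u + v + w) * x := fun u v w x => by
    rw [Complex.exp_add, Complex.exp_add]; ring
  unfold kernelMatrix kappaBulk cfac
  simp only [Matrix.of_apply, pick_shift]
  rw [show pick z i + (t:ℂ) - (pick z j + (t:ℂ)) = pick z i - pick z j by ring]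
  rw [key, key, key2]
  congr 1
  have hsi := pick_add_conj z i
  have hsj := pick_add_conj z j
  rw [abs_sq_eq, abs_sq_eq, abs_sq_eq, abs_sq_eq]
  simp only [map_add, Complex.conj_ofReal]
  congr 1
  linear_combination (t : ℂ) * hsi + (t : ℂ) * hsj

lemma prod_cfac (z : Fin k → ℂ) (t : ℝ) : ∏ m : Fin (2*k), cfac z t m = 1 := by
  rw [← prod_fin_pair]
  refine Finset.prod_eq_one fun i _ => ?_
  unfold cfac
  rw [← Complex.exp_add]
  have he : pick z (⟨2*(i:ℕ), by have := i.isLt; omega⟩ : Fin (2*k))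
      = z ⟨(i:ℕ), i.isLt⟩ := by
    simp only [pick]
    rw [if_pos (by simp [Nat.mul_mod_right])]
    congr 1
    exact Fin.ext (by simp)
  have ho : pick z (⟨2*(i:ℕ)+1, by have := i.isLt; omega⟩ : Fin (2*k))
      = (starRingEnd ℂ) (z ⟨(i:ℕ), i.isLt⟩) := by
    simp only [pick]
    rw [if_neg (by omega)]
    congr 2
    exact Fin.ext (by simp [Nat.mul_add_div])
  rw [he, ho, Complex.conj_conj, show ∀ a b : ℂ, (t:ℂ)*(a-b) + (t:ℂ)*(b-a) = 0 from
    fun a b => by ring, Complex.exp_zero]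

lemma pfaffian_shift (z : Fin k → ℂ) (t : ℝ) :
    pfaffian (kernelMatrix (fun m => z m + (t : ℂ))) = pfaffian (kernelMatrix z) := by
  unfold pfaffian
  congr 1
  refine Finset.sum_congr rfl fun σ _ => ?_
  congr 1
  have : ∀ i : Fin k,
      kernelMatrix (fun m => z m + (t : ℂ)) (σ ⟨2*(i:ℕ), by have := i.isLt; omega⟩)
        (σ ⟨2*(i:ℕ)+1, by have := i.isLt; omega⟩)
      = (cfac z t (σ ⟨2*(i:ℕ), by have := i.isLt; omega⟩) *
          cfac z t (σ ⟨2*(i:ℕ)+1, by have := i.isLt; omega⟩)) *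
        kernelMatrix z (σ ⟨2*(i:ℕ), by have := i.isLt; omega⟩)
          (σ ⟨2*(i:ℕ)+1, by have := i.isLt; omega⟩) := fun i => entry_shift z t _ _
  rw [Finset.prod_congr rfl fun i _ => this i, Finset.prod_mul_distrib]
  have hc : ∏ i : Fin k, (cfac z t (σ ⟨2*(i:ℕ), by have := i.isLt; omega⟩) *
      cfac z t (σ ⟨2*(i:ℕ)+1, by have := i.isLt; omega⟩)) = 1 := by
    rw [prod_fin_pair (fun m => cfac z t (σ m)), Equiv.prod_comp σ (cfac z t),
      prod_cfac]
  rw [hc, one_mul]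

end Main

theorem stmt17 (k : ℕ) (z : Fin k → ℂ) (t : ℝ) :
    Rk (fun j => z j + (t : ℂ)) = Rk z := by
  unfold Rk
  rw [pfaffian_shift]
  congr 1
  refine Finset.prod_congr rfl fun j _ => ?_
  simp [map_add, Complex.conj_ofReal]
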